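/- arXiv:1708.03283 — 3 statements merged into one kernel-verified Lean document; each statement's English description precedes it below -/
import Mathlib

section
/- Let H be the Hamiltonian of a weighted path on n vertices with potentials, i.e., a real symmetric tridiagonal n×n matrix with positive off-diagonal entries H_{j,j+1} = r_j > 0 and arbitrary real diagonal entries. If there is perfect state transfer from vertex 1 to vertex n at time t_0, then for every j with 2 ≤ j ≤ n-1 there is perfect state transfer from vertex j to vertex n+1-j at the same time t_0. -/
open Matrix

/-- The Hamiltonian (adjacency matrix with potentials) of a weighted path on `n`
vertices: tridiagonal, with diagonal entries `q 1, …, q n` (potentials) and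
off-diagonal entries `r 1, …, r (n-1)` (edge weights); 1-based vertex labels. -/
noncomputable def pathHamiltonian (n : ℕ) (q r : ℕ → ℝ) : Matrix (Fin n) (Fin n) ℝ :=
  Matrix.of fun j k =>
    if (j : ℕ) = (k : ℕ) then q ((j : ℕ) + 1)
    else if (j : ℕ) + 1 = (k : ℕ) then r ((j : ℕ) + 1)
    else if (k : ℕ) + 1 = (j : ℕ) then r ((k : ℕ) + 1)
    else 0

/-- `|(e^{itH})_{j,k}|` for a real symmetric Hamiltonian `H`. -/
noncomputable def transferAmp (n : ℕ) (H : Matrix (Fin n) (Fin n) ℝ) (t : ℝ) (j k : Fin n) : ℝ :=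
  ‖(NormedSpace.exp ((Complex.I * (t : ℂ)) • H.map (fun x => (x : ℂ))) j k)‖

/-!
`U = exp(i t₀ H)` is unitary and commutes with `H`. PST from `1` to `n` makes row `1` of `U`
a multiple of `e_n`. Reading off the entries of `HU = UH` row by row, and dividing by the nonzero
weights `r_j`, every entry of `U` strictly above the antidiagonal vanishes. The same argument for
the reversed transpose `J Uᵀ J`, which commutes with the tridiagonal `J Hᵀ J` (same superdiagonal),
clears the entries below the antidiagonal, since column `n` of `U` is a multiple of `e_1`. Each
row of the unitary `U` is then concentrated on its antidiagonal entry, which has modulus `1`.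
-/

theorem apply_eq_one_iff_forall_ne_of_sum_eq_one {ι : Type*} [Fintype ι] [DecidableEq ι]
    {f : ι → ℝ} (hf : ∀ i, 0 ≤ f i) (hsum : ∑ i, f i = 1) (j : ι) :
    f j = 1 ↔ ∀ i ≠ j, f i = 0 := by
  rw [← Finset.add_sum_erase _ _ (Finset.mem_univ j)] at hsum
  have hrest : f j = 1 ↔ ∑ i ∈ Finset.univ.erase j, f i = 0 := by
    constructor <;> intro <;> linarith
  rw [hrest, Finset.sum_eq_zero_iff_of_nonneg fun i _ => hf i]
  simp [Finset.mem_erase]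

namespace Matrix

section Unitary

variable {ι 𝕜 : Type*} [Fintype ι] [DecidableEq ι] [RCLike 𝕜] {U : Matrix ι ι 𝕜}

theorem sum_norm_sq_row_of_mem_unitaryGroup (hU : U ∈ unitaryGroup ι 𝕜) (i : ι) :
    ∑ k, ‖U i k‖ ^ 2 = 1 := by
  have h : (U * star U) i i = 1 := by rw [mem_unitaryGroup_iff.1 hU, one_apply_eq]
  simp only [mul_apply, star_apply, RCLike.star_def, RCLike.mul_conj] at h
  exact_mod_cast h

theorem sum_norm_sq_col_of_mem_unitaryGroup (hU : U ∈ unitaryGroup ι 𝕜) (k : ι) :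
    ∑ i, ‖U i k‖ ^ 2 = 1 := by
  have h : (star U * U) k k = 1 := by rw [mem_unitaryGroup_iff'.1 hU, one_apply_eq]
  simp only [mul_apply, star_apply, RCLike.star_def, mul_comm _ (U _ k), RCLike.mul_conj] at h
  exact_mod_cast h

theorem norm_apply_eq_one_iff_row (hU : U ∈ unitaryGroup ι 𝕜) (i j : ι) :
    ‖U i j‖ = 1 ↔ ∀ k ≠ j, U i k = 0 := by
  simpa [pow_eq_one_iff_of_nonneg] using apply_eq_one_iff_forall_ne_of_sum_eq_one
    (fun _ => sq_nonneg _) (sum_norm_sq_row_of_mem_unitaryGroup hU i) j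

theorem norm_apply_eq_one_iff_col (hU : U ∈ unitaryGroup ι 𝕜) (i j : ι) :
    ‖U i j‖ = 1 ↔ ∀ k ≠ i, U k j = 0 := by
  simpa [pow_eq_one_iff_of_nonneg] using apply_eq_one_iff_forall_ne_of_sum_eq_one
    (fun _ => sq_nonneg _) (sum_norm_sq_col_of_mem_unitaryGroup hU j) i

open scoped Norms.L2Operator in
theorem IsHermitian.exp_I_mul_smul_mem_unitaryGroup {A : Matrix ι ι ℂ} (hA : A.IsHermitian)
    (t : ℝ) : NormedSpace.exp ((Complex.I * t) • A) ∈ unitaryGroup ι ℂ := by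
  let _ : NormedAlgebra ℚ (Matrix ι ι ℂ) := .restrictScalars ℚ ℂ _
  refine NormedSpace.exp_mem_unitary_of_mem_skewAdjoint (hA.isSelfAdjoint.smul_mem_skewAdjoint ?_)
  simp [skewAdjoint.mem_iff]

end Unitary

section Tridiagonal

variable {n : ℕ} {R : Type*}

def IsTridiagonal [Zero R] (A : Matrix (Fin n) (Fin n) R) : Prop :=
  ∀ j k : Fin n, (j : ℕ) + 1 < k ∨ (k : ℕ) + 1 < j → A j k = 0

theorem IsTridiagonal.map {S : Type*} [Zero R] [Zero S] {A : Matrix (Fin n) (Fin n) R}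
    (hA : A.IsTridiagonal) {f : R → S} (hf : f 0 = 0) : (A.map f).IsTridiagonal := by
  intro j k hjk
  rw [map_apply, hA j k hjk, hf]

theorem IsTridiagonal.transpose_submatrix_rev [Zero R] {A : Matrix (Fin n) (Fin n) R}
    (hA : A.IsTridiagonal) : (Aᵀ.submatrix Fin.rev Fin.rev).IsTridiagonal := by
  intro j k hjk
  apply hA
  simp only [Fin.val_rev]
  omega

theorem _root_.Commute.transpose_submatrix_rev [CommRing R] {A B : Matrix (Fin n) (Fin n) R}
    (h : Commute A B) :
    Commute (Aᵀ.submatrix Fin.rev Fin.rev) (Bᵀ.submatrix Fin.rev Fin.rev) := by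
  unfold Commute SemiconjBy
  rw [show (Fin.rev : Fin n → Fin n) = Fin.revPerm from rfl, submatrix_mul_equiv,
    submatrix_mul_equiv, ← transpose_mul, ← transpose_mul, h.eq]

theorem IsTridiagonal.apply_eq_zero_of_lt_rev [CommRing R] [NoZeroDivisors R]
    {A U : Matrix (Fin n) (Fin n) R} (hA : A.IsTridiagonal)
    (hsuper : ∀ j k : Fin n, (j : ℕ) + 1 = k → A j k ≠ 0) (hAU : Commute A U)
    (hrow : ∀ j k : Fin n, (j : ℕ) = 0 → k < j.rev → U j k = 0) :
    ∀ j k : Fin n, k < j.rev → U j k = 0 := by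
  intro i
  induction i using WellFoundedLT.induction with
  | _ i ih =>
  intro k hk
  rcases Nat.eq_zero_or_pos i with hi | hi
  · exact hrow i k hi hk
  obtain ⟨p, hp⟩ : ∃ p : Fin n, (p : ℕ) + 1 = i := ⟨⟨i - 1, by omega⟩, by simp only; omega⟩
  have hpk : (k : ℕ) + 1 < p.rev := by
    rw [Fin.lt_def, Fin.val_rev] at hk
    rw [Fin.val_rev]
    omega
  -- Entry `(p, k)` of `AU = UA`: the only surviving term is `A p i * U i k`.
  have hentry : ∑ m, A p m * U m k = ∑ m, U p m * A m k := by
    simpa only [mul_apply] using congrFun (congrFun hAU.eq p) k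
  have hleft : ∑ m, A p m * U m k = A p i * U i k := by
    refine Finset.sum_eq_single i (fun m _ hm => ?_) (by simp)
    rcases lt_or_gt_of_ne hm with hm | hm
    · rw [ih m hm k (hk.trans (Fin.rev_lt_rev.2 hm)), mul_zero]
    · rw [hA p m (Or.inl (by rw [Fin.lt_def] at hm; omega)), zero_mul]
  have hright : ∑ m, U p m * A m k = 0 := by
    refine Finset.sum_eq_zero fun m _ => ?_
    by_cases hm : (m : ℕ) ≤ k + 1
    · rw [ih p (by rw [Fin.lt_def]; omega) m (by rw [Fin.lt_def]; omega), zero_mul]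
    · rw [hA m k (Or.inr (by omega)), mul_zero]
  rw [hleft, hright] at hentry
  exact (mul_eq_zero.mp hentry).resolve_left (hsuper p i hp)

theorem IsTridiagonal.norm_apply_rev_eq_one {𝕜 : Type*} [RCLike 𝕜]
    {A U : Matrix (Fin n) (Fin n) 𝕜} (hA : A.IsTridiagonal)
    (hsuper : ∀ j k : Fin n, (j : ℕ) + 1 = k → A j k ≠ 0) (hU : U ∈ unitaryGroup (Fin n) 𝕜)
    (hAU : Commute A U) {i₀ : Fin n} (hi₀ : (i₀ : ℕ) = 0) (h₀ : ‖U i₀ i₀.rev‖ = 1) (i : Fin n) :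
    ‖U i i.rev‖ = 1 := by
  have hfirst : ∀ j : Fin n, (j : ℕ) = 0 → j = i₀ := fun j hj => Fin.ext (hj.trans hi₀.symm)
  have above : ∀ j k : Fin n, k < j.rev → U j k = 0 :=
    hA.apply_eq_zero_of_lt_rev hsuper hAU fun j k hj hk => by
      obtain rfl := hfirst j hj
      exact (norm_apply_eq_one_iff_row hU _ _).1 h₀ k hk.ne
  have below : ∀ j k : Fin n, j.rev < k → U j k = 0 := by
    have hmirror := hA.transpose_submatrix_rev.apply_eq_zero_of_lt_rev ?_
      hAU.transpose_submatrix_rev ?_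
    · intro j k hjk
      simpa using hmirror k.rev j.rev (by rwa [Fin.rev_rev])
    · intro j k hjk
      apply hsuper
      simp only [Fin.val_rev]
      omega
    · intro j k hj hk
      obtain rfl := hfirst j hj
      refine (norm_apply_eq_one_iff_col hU _ _).1 h₀ k.rev fun h => ?_
      rw [← h, Fin.rev_rev] at hk
      exact hk.false
  rw [norm_apply_eq_one_iff_row hU]
  intro k hk
  rcases lt_or_gt_of_ne hk with h | h
  exacts [above i k h, below i k h]

end Tridiagonal

end Matrix

theorem pathHamiltonian_isTridiagonal (n : ℕ) (q r : ℕ → ℝ) :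
    (pathHamiltonian n q r).IsTridiagonal := by
  intro j k hjk
  simp only [pathHamiltonian, of_apply]
  split_ifs <;> first | rfl | omega

theorem pathHamiltonian_apply_of_succ_eq {n : ℕ} (q r : ℕ → ℝ) {j k : Fin n}
    (hjk : (j : ℕ) + 1 = k) : pathHamiltonian n q r j k = r (j + 1) := by
  simp only [pathHamiltonian, of_apply]
  split_ifs <;> first | rfl | omega

theorem pathHamiltonian_isSymm (n : ℕ) (q r : ℕ → ℝ) : (pathHamiltonian n q r).IsSymm := by
  refine IsSymm.ext fun j k => ?_
  simp only [pathHamiltonian, of_apply]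
  split_ifs <;> first | rfl | omega | (congr 1; omega)

/-- For a weighted path with potentials, PST from vertex `1` to vertex `n` at time `t₀`
implies PST from vertex `j` to vertex `n+1-j` at the same time, for all `2 ≤ j ≤ n-1`. -/
theorem pst_endpoints_implies_pst_internal (n : ℕ) (hn : 1 ≤ n) (q r : ℕ → ℝ)
    (hr : ∀ j, 1 ≤ j → j ≤ n - 1 → 0 < r j) (t₀ : ℝ)
    (hpst : transferAmp n (pathHamiltonian n q r) t₀ ⟨0, by omega⟩ ⟨n - 1, by omega⟩ = 1) :
    ∀ j (_ : 2 ≤ j) (_ : j ≤ n - 1),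
      transferAmp n (pathHamiltonian n q r) t₀ ⟨j - 1, by omega⟩ ⟨n - j, by omega⟩ = 1 := by
  set A := (pathHamiltonian n q r).map ((↑) : ℝ → ℂ)
  have hA : A.IsTridiagonal := (pathHamiltonian_isTridiagonal n q r).map Complex.ofReal_zero
  have hsuper : ∀ j k : Fin n, (j : ℕ) + 1 = k → A j k ≠ 0 := fun j k hjk => by
    simp only [A, map_apply, pathHamiltonian_apply_of_succ_eq q r hjk, Complex.ofReal_ne_zero]
    exact (hr _ (by omega) (by omega)).ne'
  have hherm : A.IsHermitian :=
    (pathHamiltonian_isSymm n q r) |> isHermitian_iff_isSymm.2 |>.map _ fun _ => by simp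
  have hAU : Commute A (NormedSpace.exp ((Complex.I * t₀) • A)) :=
    ((Commute.refl A).smul_right _).exp_right
  have h₀ : ‖NormedSpace.exp ((Complex.I * t₀) • A) ⟨0, by omega⟩ (Fin.rev ⟨0, by omega⟩)‖ = 1 := by
    rwa [show Fin.rev ⟨0, by omega⟩ = (⟨n - 1, by omega⟩ : Fin n) from Fin.ext (by simp)]
  intro j hj₂ hjn
  have h := hA.norm_apply_rev_eq_one hsuper (hherm.exp_I_mul_smul_mem_unitaryGroup t₀) hAU rfl h₀
    ⟨j - 1, by omega⟩
  rwa [show Fin.rev ⟨j - 1, by omega⟩ = (⟨n - j, by omega⟩ : Fin n) from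
    Fin.ext (by simp only [Fin.val_rev]; omega)] at h
end

section
/- Let m ≥ 1, let E and C be arbitrary m×m real matrices, and let R be the m×m reversal matrix (ones on the antidiagonal, zeros elsewhere). Then the 2m×2m block matrix B = [[E, RCR], [C, RER]] is orthogonally similar to the block diagonal matrix diag(E - RC, E + RC); that is, there exists a real orthogonal 2m×2m matrix U with Uᵀ B U = diag(E - RC, E + RC). -/
/-!
The witness is `U = 2^{-1/2} V` with `V = [[I, I], [-R, R]]`. Since `R` is a symmetric involution
(the permutation matrix of `Fin.rev`), multiplying out the blocks gives `Vᵀ V = 2 I` and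
`Vᵀ B V = 2 diag(E - RC, E + RC)`.
-/

open Matrix

/-- The `m × m` reversal matrix: ones on the antidiagonal, zeros elsewhere. -/
noncomputable def reversal (m : ℕ) : Matrix (Fin m) (Fin m) ℝ :=
  Matrix.of fun j k => if (j : ℕ) + (k : ℕ) = m - 1 then 1 else 0

theorem reversal_eq_permMatrix (m : ℕ) : reversal m = Fin.revPerm.permMatrix ℝ := by
  ext j k
  simp only [reversal, of_apply, PEquiv.toMatrix_apply, Equiv.toPEquiv_apply, Option.mem_def,
    Option.some.injEq, Fin.revPerm_apply, Fin.ext_iff, Fin.val_rev]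
  congr 1
  simp only [eq_iff_iff]
  omega

theorem reversal_transpose (m : ℕ) : (reversal m)ᵀ = reversal m := by
  rw [reversal_eq_permMatrix, transpose_permMatrix]
  rfl

theorem reversal_mul_self (m : ℕ) : reversal m * reversal m = 1 := by
  rw [reversal_eq_permMatrix, ← permMatrix_mul,
    show Fin.revPerm * Fin.revPerm = (1 : Equiv.Perm (Fin m)) from Equiv.ext Fin.rev_rev,
    permMatrix_one]

section BlockSplitting

variable {n α : Type*} [Fintype n] [DecidableEq n] [CommRing α]

def blockSplitting (R : Matrix n n α) : Matrix (n ⊕ n) (n ⊕ n) α :=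
  fromBlocks 1 1 (-R) R

variable {R : Matrix n n α} (hRT : Rᵀ = R) (hRR : R * R = 1)
include hRT hRR

theorem blockSplitting_transpose_mul_self :
    (blockSplitting R)ᵀ * blockSplitting R = (2 : α) • 1 := by
  rw [blockSplitting, fromBlocks_transpose, fromBlocks_multiply, ← fromBlocks_one,
    fromBlocks_smul]
  simp only [transpose_neg, transpose_one, hRT, Matrix.mul_one, Matrix.neg_mul, Matrix.mul_neg,
    neg_neg, hRR]
  congr 1 <;> module

theorem blockSplitting_transpose_mul_mul (E C : Matrix n n α) :
    (blockSplitting R)ᵀ * fromBlocks E (R * C * R) C (R * E * R) * blockSplitting R =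
      (2 : α) • fromBlocks (E - R * C) 0 0 (E + R * C) := by
  have hRR' : ∀ X : Matrix n n α, R * (R * X) = X := fun X => by
    rw [← Matrix.mul_assoc, hRR, Matrix.one_mul]
  rw [blockSplitting, fromBlocks_transpose, fromBlocks_multiply, fromBlocks_multiply,
    fromBlocks_smul]
  simp only [transpose_neg, transpose_one, hRT, Matrix.one_mul, Matrix.mul_one, Matrix.neg_mul,
    Matrix.mul_neg, Matrix.add_mul, Matrix.mul_assoc, hRR, hRR']
  congr 1 <;> module

end BlockSplitting

theorem cantoni_butler_even_general (m : ℕ) (E C : Matrix (Fin m) (Fin m) ℝ) :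
    ∃ U : Matrix (Fin m ⊕ Fin m) (Fin m ⊕ Fin m) ℝ,
      Uᵀ * U = 1 ∧
      Uᵀ * (Matrix.fromBlocks E (reversal m * C * reversal m) C
              (reversal m * E * reversal m)) * U =
        Matrix.fromBlocks (E - reversal m * C) 0 0 (E + reversal m * C) := by
  have hRT := reversal_transpose m
  have hRR := reversal_mul_self m
  have hnorm : (√2)⁻¹ * (√2)⁻¹ * 2 = (1 : ℝ) := by
    rw [← mul_inv, Real.mul_self_sqrt zero_le_two, inv_mul_cancel₀ two_ne_zero]
  refine ⟨(√2)⁻¹ • blockSplitting (reversal m), ?_, ?_⟩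
  · rw [transpose_smul, Matrix.smul_mul, Matrix.mul_smul,
      blockSplitting_transpose_mul_self hRT hRR, smul_smul, smul_smul, hnorm, one_smul]
  · rw [transpose_smul, Matrix.smul_mul, Matrix.smul_mul, Matrix.mul_smul,
      blockSplitting_transpose_mul_mul hRT hRR, smul_smul, smul_smul, hnorm, one_smul]

/-- The block matrix `[[E, RCR], [C, RER]]` is orthogonally similar to
`diag(E - RC, E + RC)`. -/
theorem cantoni_butler_even (m : ℕ) (hm : 1 ≤ m) (E C : Matrix (Fin m) (Fin m) ℝ) :
    ∃ U : Matrix (Fin m ⊕ Fin m) (Fin m ⊕ Fin m) ℝ,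
      Uᵀ * U = 1 ∧
      Uᵀ * (Matrix.fromBlocks E (reversal m * C * reversal m) C
              (reversal m * E * reversal m)) * U =
        Matrix.fromBlocks (E - reversal m * C) 0 0 (E + reversal m * C) :=
  cantoni_butler_even_general m E C
end

section
/- Let n ≥ 3 be odd with n ≡ 3 (mod 8) or n ≡ 5 (mod 8), and let α_1, ..., α_n be integers such that α_r is odd whenever r is odd and α_r is even whenever r is even. Set S_1 = Σ_{r=1}^n (-1)^{r+n} α_r and S_2 = Σ_{r=1}^n (-1)^{r+n} α_r². Then S_2 - S_1² is not a perfect square; in fact there is no integer k with k² = S_2 - S_1². -/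
/-!
Modulo 4 only the parities of the `α r` matter. With `m` the number of odd indices in `1..n`,
every odd index contributes `1` to `S₂` (its sign is `+1` because `n` is odd, and an odd
square is `1 mod 4`) and every even index contributes `0`, so `S₂ ≡ m (mod 4)`; likewise
`S₁ ≡ m (mod 2)`, whence `S₁² ≡ m² (mod 4)`. So `S₂ - S₁² ≡ m - m² (mod 4)`, which is
`2 mod 4` exactly when `m ≡ 2, 3 (mod 4)`, i.e. when `n = 2m - 1 ≡ 3, 5 (mod 8)`; and `2` is
not a square mod 4.
-/

open Finset

theorem Nat.card_filter_odd_Icc (n : ℕ) : #{r ∈ Icc 1 n | Odd r} = n - n / 2 := by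
  have hsplit := card_filter_add_card_filter_not (s := Ioc 0 n) (2 ∣ ·)
  rw [Nat.Ioc_filter_dvd_card_eq_div, Nat.card_Ioc, ← Icc_add_one_left_eq_Ioc] at hsplit
  simp only [← even_iff_two_dvd, Nat.not_even_iff_odd, zero_add] at hsplit
  omega

theorem Int.sq_modEq_sq_of_modEq_two {a b : ℤ} (h : a ≡ b [ZMOD 2]) :
    a ^ 2 ≡ b ^ 2 [ZMOD 4] := by
  obtain ⟨c, hc⟩ := h.symm.dvd
  exact Int.modEq_iff_dvd.2 ⟨-(c * (c + b)), by linear_combination (-(a + b + 2 * c)) * hc⟩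

theorem Int.neg_one_pow_mul_modEq_two (k : ℕ) (a : ℤ) : (-1) ^ k * a ≡ a [ZMOD 2] := by
  simpa using ((show (-1 : ℤ) ≡ 1 [ZMOD 2] by decide).pow k).mul_right a

theorem Int.modEq_ite_odd_of_parity {r : ℕ} {a : ℤ} (hodd : Odd r → Odd a)
    (heven : Even r → Even a) : a ≡ if Odd r then 1 else 0 [ZMOD 2] := by
  split_ifs with hr
  · exact Int.odd_iff.mp (hodd hr)
  · exact Int.even_iff.mp (heven (Nat.not_odd_iff_even.mp hr))

theorem Int.sq_modEq_ite_odd_of_parity {r : ℕ} {a : ℤ} (hodd : Odd r → Odd a)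
    (heven : Even r → Even a) : a ^ 2 ≡ if Odd r then 1 else 0 [ZMOD 4] := by
  simpa [apply_ite (· ^ 2)] using
    Int.sq_modEq_sq_of_modEq_two (Int.modEq_ite_odd_of_parity hodd heven)

section AlternatingSum

variable {s : Finset ℕ} {α : ℕ → ℤ}

theorem alternating_sum_modEq_card_odd (n : ℕ)
    (hα : ∀ r ∈ s, (Odd r → Odd (α r)) ∧ (Even r → Even (α r))) :
    ∑ r ∈ s, (-1) ^ (r + n) * α r ≡ #{r ∈ s | Odd r} [ZMOD 2] := by
  rw [← sum_boole]
  refine Int.ModEq.sum fun r hr => ?_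
  exact (Int.neg_one_pow_mul_modEq_two _ _).trans
    (Int.modEq_ite_odd_of_parity (hα r hr).1 (hα r hr).2)

theorem alternating_sum_sq_modEq_card_odd {n : ℕ} (hn : Odd n)
    (hα : ∀ r ∈ s, (Odd r → Odd (α r)) ∧ (Even r → Even (α r))) :
    ∑ r ∈ s, (-1) ^ (r + n) * α r ^ 2 ≡ #{r ∈ s | Odd r} [ZMOD 4] := by
  rw [← sum_boole]
  refine Int.ModEq.sum fun r hr => ?_
  have hsq := Int.sq_modEq_ite_odd_of_parity (hα r hr).1 (hα r hr).2
  split_ifs at hsq ⊢ with hr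
  · simpa [(hr.add_odd hn).neg_one_pow] using hsq
  · simpa using hsq.mul_left ((-1) ^ (r + n))

end AlternatingSum

theorem sq_ne_sub_sq_of_modEq {S₁ S₂ m : ℤ} (h₁ : S₁ ≡ m [ZMOD 2])
    (h₂ : S₂ ≡ m [ZMOD 4]) (hm : m % 4 = 2 ∨ m % 4 = 3) (k : ℤ) : k ^ 2 ≠ S₂ - S₁ ^ 2 := by
  intro hk
  have : k ^ 2 ≡ m - m ^ 2 [ZMOD 4] := hk ▸ h₂.sub (Int.sq_modEq_sq_of_modEq_two h₁)
  have hm' : (m - m ^ 2) % 4 = 2 := by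
    rcases hm with hm | hm <;> simp [Int.sub_emod, pow_two, Int.mul_emod, hm]
  exact Int.sq_ne_two_mod_four k (by rw [← pow_two, this, hm'])

theorem alternating_sum_not_square_general (n : ℕ) (hodd : Odd n)
    (hmod : n % 8 = 3 ∨ n % 8 = 5) (α : ℕ → ℤ)
    (hpar : ∀ r, 1 ≤ r → r ≤ n → (Odd r → Odd (α r)) ∧ (Even r → Even (α r)))
    (S₁ S₂ : ℤ)
    (hS₁ : S₁ = ∑ r ∈ Finset.Icc 1 n, (-1 : ℤ) ^ (r + n) * α r)
    (hS₂ : S₂ = ∑ r ∈ Finset.Icc 1 n, (-1 : ℤ) ^ (r + n) * (α r) ^ 2) :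
    ¬ ∃ k : ℤ, k ^ 2 = S₂ - S₁ ^ 2 := by
  have hα : ∀ r ∈ Icc 1 n, (Odd r → Odd (α r)) ∧ (Even r → Even (α r)) := fun r hr =>
    hpar r (mem_Icc.mp hr).1 (mem_Icc.mp hr).2
  have h₁ := alternating_sum_modEq_card_odd n hα
  have h₂ := alternating_sum_sq_modEq_card_odd hodd hα
  rw [← hS₁, Nat.card_filter_odd_Icc] at h₁
  rw [← hS₂, Nat.card_filter_odd_Icc] at h₂
  rintro ⟨k, hk⟩
  exact sq_ne_sub_sq_of_modEq h₁ h₂ (by omega) k hk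

/-- Let `n ≥ 3` be odd with `n ≡ 3 (mod 8)` or `n ≡ 5 (mod 8)`, and let
`α 1, …, α n` be integers with `α r` odd for `r` odd and `α r` even for `r` even.
Then `S₂ - S₁²` is not a perfect square, where `S₁ = ∑ (-1)^(r+n) α r` and
`S₂ = ∑ (-1)^(r+n) (α r)^2`. -/
theorem alternating_sum_not_square (n : ℕ) (hn : 3 ≤ n) (hodd : Odd n)
    (hmod : n % 8 = 3 ∨ n % 8 = 5) (α : ℕ → ℤ)
    (hpar : ∀ r, 1 ≤ r → r ≤ n → (Odd r → Odd (α r)) ∧ (Even r → Even (α r)))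
    (S₁ S₂ : ℤ)
    (hS₁ : S₁ = ∑ r ∈ Finset.Icc 1 n, (-1 : ℤ) ^ (r + n) * α r)
    (hS₂ : S₂ = ∑ r ∈ Finset.Icc 1 n, (-1 : ℤ) ^ (r + n) * (α r) ^ 2) :
    ¬ ∃ k : ℤ, k ^ 2 = S₂ - S₁ ^ 2 :=
  alternating_sum_not_square_general n hodd hmod α hpar S₁ S₂ hS₁ hS₂
end
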